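/- Let t, w, r, d ∈ ℕ with r + t ≤ w + 1 and d ≥ 1. Then for all s ≤ t it holds that μ(w,r,s,d) = A(r+s, 2d, s), where A(ν, 2δ, ω) is the maximum size of a binary code of length ν, constant Hamming weight ω, and minimum Hamming distance 2δ. -/

import Mathlib

open scoped BigOperators Classical
open Filter

namespace TandemDup

variable {S : Type} [Fintype S] [DecidableEq S] [Ring S]

/-- A single tandem duplication with window length `k`:
`a = xyz` with `|y| = k` is mapped to `b = xyyz`. -/
def Dup (k : ℕ) (a b : List S) : Prop :=
  ∃ x y z : List S, y.length = k ∧ a = x ++ y ++ z ∧ b = x ++ y ++ y ++ z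

/-- `DescN k t x y` : `y` is a `t`-descendant of `x`. -/
def DescN (k : ℕ) : ℕ → List S → List S → Prop
  | 0, a, b => a = b
  | t + 1, a, b => ∃ c, DescN k t a c ∧ Dup k c b

/-- The set `D^t(x)` of `t`-descendants of `x`. -/
def DSet (k t : ℕ) (x : List S) : Set (List S) := {y | DescN k t x y}

/-- The descendant cone `D^*(x)`. -/
def DStar (k : ℕ) (x : List S) : Set (List S) := ⋃ t : ℕ, DSet k t x

/-- A string of length at least `k` is irreducible if it has no ancestor other than itself. -/
def Irred (k : ℕ) (x : List S) : Prop :=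
  k ≤ x.length ∧ ∀ z : List S, x ∈ DStar k z → z = x

/-- The duplication root `rt(y)`: an irreducible ancestor of `y` (unique, by the theory). -/
noncomputable def rt (k : ℕ) (y : List S) : List S :=
  if h : ∃ x : List S, Irred k x ∧ y ∈ DStar k x then h.choose else y

/-- The (non-anchor part of the) discrete derivative `φ̄(x)`. -/
def phiBar (k : ℕ) (x : List S) : List S :=
  (List.range (x.length - k)).map (fun i => x.getD (i + k) 0 - x.getD i 0)

/-- Hamming weight of a string: the number of its nonzero letters. -/
def wtH (l : List S) : ℕ := (l.filter (fun a => decide (a ≠ 0))).length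

/-- `w(x) := wt_H(φ̄(x))`. -/
def wgt (k : ℕ) (x : List S) : ℕ := wtH (phiBar k x)

/-- `r(x) := (|x| - |rt(x)|)/k`, the number of duplications taking `rt(x)` to `x`. -/
noncomputable def rr (k : ℕ) (x : List S) : ℕ := (x.length - (rt k x).length) / k

/-- The typicality condition on the weight `w`. -/
def wTypical (q k n w : ℕ) : Prop :=
  |(w : ℝ) - (((q : ℝ) - 1) / (q : ℝ)) * ((n : ℝ) - (k : ℝ))| < (n : ℝ) ^ ((3 : ℝ) / 4)

/-- The typicality condition on the number of duplications `r`. -/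
def rTypical (q k n r : ℕ) : Prop :=
  |(r : ℝ) - (((q : ℝ) - 1) / ((q : ℝ) * ((q : ℝ) ^ k - 1))) * ((n : ℝ) - (k : ℝ))|
    < 2 * (n : ℝ) ^ ((3 : ℝ) / 4)

/-- The typical set `typ^n`. -/
def typ (k n : ℕ) : Set (List S) :=
  {x | x.length = n ∧ wTypical (Fintype.card S) k n (wgt k x) ∧
    rTypical (Fintype.card S) k n (rr k x)}

/-- The uncertainty `N_t(m, C)`: the maximal size of `⋂ᵢ D^t(xᵢ)` over pairwise
distinct `x₁, …, x_m ∈ C`. -/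
noncomputable def Nt (k t m : ℕ) (C : Set (List S)) : ℕ :=
  sSup { N : ℕ | ∃ f : Fin m → List S, Function.Injective f ∧ (∀ i, f i ∈ C) ∧
    N = (⋂ i, DSet k t (f i)).ncard }

/-- `S̄_t(u₁, …, u_m) = ⋂ᵢ {v : v ≥ uᵢ, ‖v - uᵢ‖₁ = t}`. -/
def Sbar (w t : ℕ) {m : ℕ} (u : Fin m → (Fin (w + 1) → ℕ)) : Set (Fin (w + 1) → ℕ) :=
  ⋂ i, {v | u i ≤ v ∧ ∑ j, (v j - u i j) = t}

/-- `N̄_t(m, w, r)`. -/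
noncomputable def Nbar (t m w r : ℕ) : ℕ :=
  sSup { N : ℕ | ∃ u : Fin m → (Fin (w + 1) → ℕ), Function.Injective u ∧
    (∀ i, ∑ j, u i j = r) ∧ N = (Sbar w t u).ncard }

/-- The minimum supremum height `σ(m, w, r)`. -/
noncomputable def sigma (m w r : ℕ) : ℕ :=
  sInf { s : ℕ | ∃ u : Fin m → (Fin (w + 1) → ℕ), Function.Injective u ∧
    (∀ i, ∑ j, u i j = r) ∧ (∑ j, Finset.univ.sup fun i => u i j) = r + s }

/-- The lower-bounds set `A_r(u)`. -/
def lbs (w r : ℕ) (u : Fin (w + 1) → ℕ) : Set (Fin (w + 1) → ℕ) :=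
  {v | (∑ j, v j) = r ∧ v ≤ u}

/-- The maximal lower-bounds-set size `μ(w, r, s)`. -/
noncomputable def mu (w r s : ℕ) : ℕ :=
  sSup { N : ℕ | ∃ u : Fin (w + 1) → ℕ, (∑ j, u j) = r + s ∧ N = (lbs w r u).ncard }

/-- Twice the distance `d₁`, i.e. the `ℓ₁`-distance `‖u - v‖₁` on `ℕ^{w+1}`. -/
def l1dist {w : ℕ} (u v : Fin (w + 1) → ℕ) : ℕ :=
  ∑ j, ((u j - v j) + (v j - u j))

/-- `N̄_t(m, w, r, d)`. -/
noncomputable def NbarD (t m w r d : ℕ) : ℕ :=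
  sSup { N : ℕ | ∃ u : Fin m → (Fin (w + 1) → ℕ),
    (∀ i, ∑ j, u i j = r) ∧ (∀ i j, i ≠ j → 2 * d ≤ l1dist (u i) (u j)) ∧
    N = (Sbar w t u).ncard }

/-- `σ(m, w, r, d)`. -/
noncomputable def sigmaD (m w r d : ℕ) : ℕ :=
  sInf { s : ℕ | ∃ u : Fin m → (Fin (w + 1) → ℕ),
    (∀ i, ∑ j, u i j = r) ∧ (∀ i j, i ≠ j → 2 * d ≤ l1dist (u i) (u j)) ∧
    (∑ j, Finset.univ.sup fun i => u i j) = r + s }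

/-- `μ(w, r, s, d)`. -/
noncomputable def muD (w r s d : ℕ) : ℕ :=
  sSup { N : ℕ | ∃ u : Fin (w + 1) → ℕ, (∑ j, u j) = r + s ∧
    ∃ C : Set (Fin (w + 1) → ℕ), C ⊆ lbs w r u ∧
      (∀ v₁ ∈ C, ∀ v₂ ∈ C, v₁ ≠ v₂ → 2 * d ≤ l1dist v₁ v₂) ∧ N = C.ncard }

/-- The duplication distance `d(y₁, y₂)`. -/
noncomputable def distDup (k : ℕ) (y₁ y₂ : List S) : ℕ :=
  sInf {t : ℕ | (DSet k t y₁ ∩ DSet k t y₂).Nonempty}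

/-- `N^typ_t(m, n, d)`. -/
noncomputable def NtypD (k t m n d : ℕ) : ℕ :=
  sSup { N : ℕ | ∃ f : Fin m → List S, (∀ i, f i ∈ typ k n) ∧
    (∀ i j, i ≠ j → d ≤ distDup k (f i) (f j)) ∧
    N = (⋂ i, DSet k t (f i)).ncard }

/-- `A(ν, D, ω)`: the maximum size of a binary code of length `ν`, constant Hamming
weight `ω`, and minimum Hamming distance `D`. -/
noncomputable def Abin (ν D ω : ℕ) : ℕ :=
  sSup { N : ℕ | ∃ C : Set (Fin ν → ZMod 2), (∀ x ∈ C, hammingNorm x = ω) ∧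
    (∀ x ∈ C, ∀ y ∈ C, x ≠ y → D ≤ hammingDist x y) ∧ N = C.ncard }

/-- Zero-run-length representation: `ψ_x(y)` as a list, mapping `φ̄(y)` written as
`0^{u(1)} a₁ 0^{u(2)} … a_w 0^{u(w+1)}` (with the `aᵢ` nonzero) to
`(⌊u(1)/k⌋, …, ⌊u(w+1)/k⌋)`. -/
def psiList (k : ℕ) (y : List S) : List ℕ :=
  ((phiBar k y).splitOnP (fun a => decide (a ≠ 0))).map (fun run => run.length / k)

/-- `ψ_x(y)` as a vector in `ℕ^{w+1}`. -/
def psiVec (k w : ℕ) (y : List S) : Fin (w + 1) → ℕ := fun i => (psiList k y).getD i 0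

/-- `s = ⌈log_n m⌉`. -/
noncomputable def sExp (n m : ℕ) : ℕ := ⌈Real.logb n m⌉₊

/-- The indicator `δ(m, n)` of Theorem 17. -/
noncomputable def deltaTyp (q k n m : ℕ) : ℕ :=
  if ∀ r : ℕ, rTypical q k n r → Nat.choose (r + sExp n m) r < m then 1 else 0

/-- `s = ⌈log_n m⌉ + d - 1`. -/
noncomputable def sExpD (n m d : ℕ) : ℕ := sExp n m + (d - 1)

/-- The indicator `δ(m, n, d)` of Theorem 29. -/
noncomputable def deltaEcc (q k d n m : ℕ) : ℕ :=
  if ∀ r : ℕ, rTypical q k n r → Abin (r + sExpD n m d) (2 * d) (sExpD n m d) < m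
  then 1 else 0


/-! Write `v ≤ u` in unary inside consecutive blocks of lengths `u j`: block `j` holds `v j`
zeros followed by `u j - v j` ones. When `‖u‖₁ = r + s` and `‖v‖₁ = r` this is a binary word
of length `r + s` and weight `s`, and the Hamming distance of two such words is `‖v - v'‖₁`;
so a code in `A_r(u)` becomes a constant-weight binary code of the same size and minimum
distance. Conversely, since `r + s ≤ w + 1`, a word of length `r + s` and weight `s` can be sent
to the 0/1 vector marking its zeros, padded with zeros: this lands isometrically in `A_r(u)` for
`u` the indicator of the first `r + s` coordinates. -/

section Codes

variable {α β : Type*}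

def IsCode (dist : α → α → ℕ) (D : ℕ) (C : Set α) : Prop :=
  ∀ x ∈ C, ∀ y ∈ C, x ≠ y → D ≤ dist x y

def IsometryOn (dα : α → α → ℕ) (dβ : β → β → ℕ) (f : α → β) (A : Set α) : Prop :=
  ∀ a ∈ A, ∀ a' ∈ A, dβ (f a) (f a') = dα a a'

variable {dα : α → α → ℕ} {dβ : β → β → ℕ} {f : α → β} {A : Set α}

lemma IsometryOn.injOn (hf : IsometryOn dα dβ f A) (hα : ∀ a a', dα a a' = 0 → a = a')
    (hβ : ∀ b, dβ b b = 0) : A.InjOn f :=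
  fun a ha a' ha' h => hα a a' (by rw [← hf a ha a' ha', h, hβ])

lemma IsometryOn.isCode_image (hf : IsometryOn dα dβ f A) {D : ℕ} {C : Set α} (hCA : C ⊆ A)
    (hC : IsCode dα D C) : IsCode dβ D (f '' C) := by
  rintro _ ⟨x, hx, rfl⟩ _ ⟨y, hy, rfl⟩ hne
  rw [hf x (hCA hx) y (hCA hy)]
  exact hC x hx y hy (ne_of_apply_ne f hne)

lemma IsometryOn.exists_isCode_image {B : Set β} (hf : IsometryOn dα dβ f A)
    (hAB : Set.MapsTo f A B) (hα : ∀ a a', dα a a' = 0 → a = a') (hβ : ∀ b, dβ b b = 0)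
    {D : ℕ} {C : Set α} (hCA : C ⊆ A) (hC : IsCode dα D C) :
    ∃ C' ⊆ B, IsCode dβ D C' ∧ C'.ncard = C.ncard :=
  ⟨f '' C, (hAB.mono_left hCA).image_subset, hf.isCode_image hCA hC,
    ((hf.injOn hα hβ).mono hCA).ncard_image⟩

end Codes

lemma eq_of_l1dist_eq_zero {w : ℕ} {u v : Fin (w + 1) → ℕ} (h : l1dist u v = 0) : u = v := by
  funext j
  have := (Finset.sum_eq_zero_iff.mp h) j (Finset.mem_univ j)
  omega

lemma l1dist_eq_sub_of_le {w : ℕ} {u v : Fin (w + 1) → ℕ} (h : v ≤ u) :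
    l1dist v u = ∑ j, u j - ∑ j, v j := by
  rw [l1dist, ← Finset.sum_tsub_distrib _ fun j _ => h j]
  exact Finset.sum_congr rfl fun j _ => by have : v j ≤ u j := h j; omega

section HammingEncoding

lemma hammingDist_comp_equiv {ι κ γ : Type*} [Fintype ι] [Fintype κ] [DecidableEq γ]
    (e : ι ≃ κ) (x y : κ → γ) : hammingDist (x ∘ e) (y ∘ e) = hammingDist x y := by
  simp only [hammingDist, Finset.card_filter]
  exact e.sum_comp fun k => if x k ≠ y k then 1 else 0

lemma hammingDist_sigma {ι γ : Type*} {κ : ι → Type*} [Fintype ι] [∀ i, Fintype (κ i)]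
    [DecidableEq γ] (x y : (Σ i, κ i) → γ) :
    hammingDist x y = ∑ i, hammingDist (fun k => x ⟨i, k⟩) (fun k => y ⟨i, k⟩) := by
  simp only [hammingDist, Finset.card_filter]
  exact Fintype.sum_sigma _

def unaryWord (n a : ℕ) : Fin n → ZMod 2 := fun i => if (i : ℕ) < a then 0 else 1

lemma hammingDist_unaryWord {n a b : ℕ} (ha : a ≤ n) (hb : b ≤ n) :
    hammingDist (unaryWord n a) (unaryWord n b) = (a - b) + (b - a) := by
  let p : ℕ → Prop := fun i => ¬(i < a ↔ i < b)
  have hfilter : (Finset.range n).filter p = Finset.Ico (min a b) (max a b) := by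
    ext i; simp only [p, Finset.mem_filter, Finset.mem_range, Finset.mem_Ico]; omega
  have hcoord (i : Fin n) : unaryWord n a i ≠ unaryWord n b i ↔ p i := by
    simp only [unaryWord, p]; split_ifs <;> simp <;> omega
  simp only [hammingDist, hcoord, Finset.card_filter]
  rw [Fin.sum_univ_eq_sum_range (fun i => if p i then 1 else 0) n, ← Finset.card_filter,
    hfilter, Nat.card_Ico]
  omega

def blockWord {w n : ℕ} (u v : Fin (w + 1) → ℕ) (hu : ∑ j, u j = n) : Fin n → ZMod 2 :=
  (fun σ : Σ j, Fin (u j) => unaryWord (u σ.1) (v σ.1) σ.2) ∘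
    (finSigmaFinEquiv.trans (finCongr hu)).symm

variable {w n : ℕ} {u : Fin (w + 1) → ℕ} (hu : ∑ j, u j = n)
include hu

lemma hammingDist_blockWord {v v' : Fin (w + 1) → ℕ} (hv : v ≤ u) (hv' : v' ≤ u) :
    hammingDist (blockWord u v hu) (blockWord u v' hu) = l1dist v v' := by
  rw [blockWord, blockWord, hammingDist_comp_equiv, hammingDist_sigma, l1dist]
  exact Finset.sum_congr rfl fun j _ => hammingDist_unaryWord (hv j) (hv' j)

lemma blockWord_self : blockWord u u hu = 0 := by
  funext p
  simp [blockWord, unaryWord]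

lemma hammingNorm_blockWord {v : Fin (w + 1) → ℕ} (hv : v ≤ u) :
    hammingNorm (blockWord u v hu) = n - ∑ j, v j := by
  rw [← hammingDist_zero_right, ← blockWord_self hu, hammingDist_blockWord hu hv le_rfl,
    l1dist_eq_sub_of_le hv, hu]

lemma isometryOn_blockWord {r : ℕ} :
    IsometryOn l1dist hammingDist (fun v => blockWord u v hu) (lbs w r u) :=
  fun _ hv _ hv' => hammingDist_blockWord hu hv.2 hv'.2

lemma mapsTo_blockWord {r s : ℕ} (hn : n = r + s) :
    Set.MapsTo (fun v => blockWord u v hu) (lbs w r u) {x | hammingNorm x = s} := by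
  rintro v ⟨hvr, hvu⟩
  rw [Set.mem_ofPred_eq, hammingNorm_blockWord hu hvu, hvr, hn, Nat.add_sub_cancel_left]

end HammingEncoding

section PadEncoding

def padWord {n : ℕ} (w : ℕ) (x : Fin n → ZMod 2) : Fin (w + 1) → ℕ :=
  fun j => if h : (j : ℕ) < n then (if x ⟨j, h⟩ = 0 then 1 else 0) else 0

lemma sum_fin_dite_lt {M : Type*} [AddCommMonoid M] {n m : ℕ} (hnm : n ≤ m) (f : Fin n → M) :
    ∑ j : Fin m, (if h : (j : ℕ) < n then f ⟨j, h⟩ else 0) = ∑ i, f i := by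
  refine (Fintype.sum_of_injective (Fin.castLE hnm) (Fin.castLE_injective hnm) f _
    (fun j hj => dif_neg fun hjn => hj ⟨⟨j, hjn⟩, rfl⟩) (fun i => ?_)).symm
  simp

lemma padWord_le_padWord_zero {n : ℕ} (w : ℕ) (x : Fin n → ZMod 2) :
    padWord w x ≤ padWord w (0 : Fin n → ZMod 2) := by
  intro j
  unfold padWord
  split_ifs <;> simp_all

variable {w n : ℕ} (hn : n ≤ w + 1)
include hn

lemma l1dist_padWord (x y : Fin n → ZMod 2) :
    l1dist (padWord w x) (padWord w y) = hammingDist x y := by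
  have hcoord (j : Fin (w + 1)) :
      padWord w x j - padWord w y j + (padWord w y j - padWord w x j) =
        if h : (j : ℕ) < n then (if x ⟨j, h⟩ ≠ y ⟨j, h⟩ then 1 else 0) else 0 := by
    unfold padWord
    by_cases hj : (j : ℕ) < n
    · simp only [dif_pos hj]
      generalize x ⟨j, hj⟩ = a; generalize y ⟨j, hj⟩ = b
      revert a b; decide
    · simp [hj]
  rw [l1dist, hammingDist, Finset.card_filter]
  simp only [hcoord]
  exact sum_fin_dite_lt hn fun i => if x i ≠ y i then 1 else 0

lemma sum_padWord_zero : ∑ j, padWord w (0 : Fin n → ZMod 2) j = n := by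
  simp [padWord, Fin.card_filter_val_lt, hn]

lemma sum_padWord (x : Fin n → ZMod 2) : ∑ j, padWord w x j = n - hammingNorm x := by
  have hle := padWord_le_padWord_zero w x
  have hsum := Finset.sum_le_sum fun j (_ : j ∈ Finset.univ) => hle j
  have hdist := l1dist_eq_sub_of_le hle
  rw [sum_padWord_zero hn] at hsum
  rw [l1dist_padWord hn, hammingDist_zero_right, sum_padWord_zero hn] at hdist
  omega

lemma isometryOn_padWord (A : Set (Fin n → ZMod 2)) :
    IsometryOn hammingDist l1dist (padWord w) A :=
  fun x _ y _ => l1dist_padWord hn x y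

lemma mapsTo_padWord {r s : ℕ} (hrs : n = r + s) :
    Set.MapsTo (padWord w) {x : Fin n → ZMod 2 | hammingNorm x = s}
      (lbs w r (padWord w (0 : Fin n → ZMod 2))) :=
  fun x hx => ⟨by rw [sum_padWord hn, hx, hrs, Nat.add_sub_cancel], padWord_le_padWord_zero w x⟩

end PadEncoding

theorem statement18_general (t w r d : ℕ) (h : r + t ≤ w + 1) :
    ∀ s ≤ t, muD w r s d = Abin (r + s) (2 * d) s := by
  intro s hs
  have hrs : r + s ≤ w + 1 := by omega
  rw [muD, Abin]
  congr 1
  ext N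
  constructor
  · rintro ⟨u, hu, C, hCA, hC, rfl⟩
    obtain ⟨C', hC'B, hC', hcard⟩ := (isometryOn_blockWord hu).exists_isCode_image
      (mapsTo_blockWord hu rfl) (fun _ _ => eq_of_l1dist_eq_zero) hammingDist_self hCA hC
    exact ⟨C', hC'B, hC', hcard.symm⟩
  · rintro ⟨C, hCB, hC, rfl⟩
    obtain ⟨C', hC'A, hC', hcard⟩ := (isometryOn_padWord hrs _).exists_isCode_image
      (mapsTo_padWord hrs rfl) (fun _ _ => hammingDist_eq_zero.mp)
      (fun _ => by simp [l1dist]) hCB hC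
    exact ⟨padWord w 0, sum_padWord_zero hrs, C', hC'A, hC', hcard.symm⟩

theorem statement18 (t w r d : ℕ) (h : r + t ≤ w + 1) (hd : 1 ≤ d) :
    ∀ s ≤ t, muD w r s d = Abin (r + s) (2 * d) s :=
  statement18_general t w r d h

end TandemDup
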